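/- arXiv:1705.03070 — 2 statements merged into one kernel-verified Lean document; each statement's English description precedes it below -/
import Mathlib

section
/- Suppose R > 0 and for i = 1,...,n−1 we have λv(p_{i-1} − p_{i-1}q_{i-1} + p_i q_i) − λc_i ≥ R, and λv(p_{n-1} − p_{n-1}q_{n-1} + p_0 q_0) − λc_n ≥ R, with ∑_{i=0}^{n-1} p_i = 1 and q_i ∈ [0,1]. Then ∑_{i=1}^n λc_i ≤ λv − n·R. -/
/-!
Each constraint reads `λc_i ≤ λv · x_i − R`, where `x_i` is the traffic class `i` receives. The
`x_i` telescope cyclically to `∑ p_i = 1`, so summing the `n` constraints gives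
`∑ λc_i ≤ λv − n R`.
-/

open Finset

theorem sum_Icc_sub_add_add_sub_add_eq_sum_range {M : Type*} [AddCommGroup M] (a b : ℕ → M)
    (m : ℕ) :
    ∑ i ∈ Icc 1 m, (a (i - 1) - b (i - 1) + b i) + (a m - b m + b 0) =
      ∑ i ∈ range (m + 1), a i := by
  induction m with
  | zero => simp
  | succ m ih =>
    rw [sum_Icc_succ_top (by omega), sum_range_succ, ← ih, Nat.add_sub_cancel]
    abel

theorem epigraph_constraints_bound_general
    (n : ℕ)
    (lamv R : ℝ)
    (p q lamc : ℕ → ℝ)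
    (hpsum : ∑ i ∈ Finset.range n, p i = 1)
    (hcon : ∀ i ∈ Finset.Icc 1 (n - 1),
      lamv * (p (i - 1) - p (i - 1) * q (i - 1) + p i * q i) - lamc i ≥ R)
    (hconn : lamv * (p (n - 1) - p (n - 1) * q (n - 1) + p 0 * q 0) - lamc n ≥ R) :
    ∑ i ∈ Finset.Icc 1 n, lamc i ≤ lamv - n * R := by
  obtain ⟨m, rfl⟩ : ∃ m, n = m + 1 :=
    Nat.exists_eq_add_one.mpr (Nat.pos_of_ne_zero (by rintro rfl; simp at hpsum))
  simp only [Nat.add_sub_cancel] at hcon hconn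
  have htotal := sum_Icc_sub_add_add_sub_add_eq_sum_range p (fun i ↦ p i * q i) m
  rw [hpsum] at htotal
  calc ∑ i ∈ Icc 1 (m + 1), lamc i = ∑ i ∈ Icc 1 m, lamc i + lamc (m + 1) :=
        sum_Icc_succ_top (by omega) _
    _ ≤ ∑ i ∈ Icc 1 m, (lamv * (p (i - 1) - p (i - 1) * q (i - 1) + p i * q i) - R) +
          (lamv * (p m - p m * q m + p 0 * q 0) - R) := by
        gcongr with i hi
        · linarith [hcon i hi]
        · linarith
    _ = lamv * (∑ i ∈ Icc 1 m, (p (i - 1) - p (i - 1) * q (i - 1) + p i * q i) +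
          (p m - p m * q m + p 0 * q 0)) - (m + 1) * R := by
        rw [sum_sub_distrib, ← mul_sum, sum_const, Nat.card_Icc, nsmul_eq_mul]
        push_cast
        ring
    _ = lamv - ↑(m + 1) * R := by
        rw [htotal]
        push_cast
        ring

/-- The epigraph constraints of the dispatching LP imply
    `∑ λc_i ≤ λv − n·R`. -/
theorem epigraph_constraints_bound
    (n : ℕ) (hn : 2 ≤ n)
    (lamv R : ℝ) (hlamv : 0 < lamv) (hR : 0 < R)
    (p q lamc : ℕ → ℝ)
    (hp : ∀ i < n, 0 ≤ p i ∧ p i ≤ 1)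
    (hq : ∀ i < n, 0 ≤ q i ∧ q i ≤ 1)
    (hlamc : ∀ i ∈ Finset.Icc 1 n, 0 ≤ lamc i)
    (hpsum : ∑ i ∈ Finset.range n, p i = 1)
    (hcon : ∀ i ∈ Finset.Icc 1 (n - 1),
      lamv * (p (i - 1) - p (i - 1) * q (i - 1) + p i * q i) - lamc i ≥ R)
    (hconn : lamv * (p (n - 1) - p (n - 1) * q (n - 1) + p 0 * q 0) - lamc n ≥ R) :
    ∑ i ∈ Finset.Icc 1 n, lamc i ≤ lamv - n * R :=
  epigraph_constraints_bound_general n lamv R p q lamc hpsum hcon hconn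
end

section
/- Suppose the feasible region of the dispatching LP is nonempty: there exist q ∈ [0,1]^n and R > 0 satisfying all epigraph and charging-stability constraints. Then necessarily ∑_{i=1}^n λc_i < λv and λv < μc·(C·n + 1) + λv·∑_{i=1}^{n-1} p_i q_i for the chosen q; in particular both Lemma 1's and Lemma 2's conditions are implied by feasibility. -/
/-- Feasibility of the dispatching LP implies both Lemma 1's condition
    `∑ λc_i < λv` and Lemma 2's charging-capacity condition. -/
theorem feasibility_implies_lemmas
    (n C : ℕ) (hn : 2 ≤ n) (hC : 1 ≤ C)
    (lamv muc : ℝ) (hlamv : 0 < lamv) (hmuc : 0 < muc)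
    (p lamc : ℕ → ℝ)
    (hp : ∀ i < n, 0 ≤ p i ∧ p i ≤ 1)
    (hpsum : ∑ i ∈ Finset.range n, p i = 1)
    (hlamc : ∀ i ∈ Finset.Icc 1 n, 0 ≤ lamc i)
    (q : ℕ → ℝ) (R : ℝ)
    (hq : ∀ i < n, 0 ≤ q i ∧ q i ≤ 1) (hR : 0 < R)
    (hepi : ∀ i ∈ Finset.Icc 1 (n - 1),
      lamv * (p (i - 1) * (1 - q (i - 1)) + p i * q i) - lamc i ≥ R)
    (hepin : lamv * (p (n - 1) * (1 - q (n - 1)) + p 0 * q 0) - lamc n ≥ R)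
    (hMMC : ∑ i ∈ Finset.range n, lamv * (p i * (1 - q i)) < (C : ℝ) * (n * muc))
    (hMM1 : lamv * (p 0 * q 0) < muc) :
    (∑ i ∈ Finset.Icc 1 n, lamc i < lamv) ∧
    lamv < muc * ((C : ℝ) * n + 1) + lamv * ∑ i ∈ Finset.Icc 1 (n - 1), p i * q i := by
  obtain ⟨m, rfl⟩ : ∃ m, n = m + 1 := ⟨n - 1, by omega⟩
  have hm : 1 ≤ m := by omega
  simp only [Nat.add_sub_cancel] at *
  -- reindexing lemma
  have hIcc : ∀ f : ℕ → ℝ, ∑ i ∈ Finset.Icc 1 m, f i = ∑ i ∈ Finset.range m, f (i + 1) := by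
    intro f
    rw [← Finset.Ico_add_one_right_eq_Icc, Finset.sum_Ico_eq_sum_range]
    apply Finset.sum_congr
    · simp
    · intro i _
      rw [Nat.add_comm]
  -- basic sum splittings
  have hsplit1 : ∑ i ∈ Finset.range (m + 1), p i * (1 - q i)
      = ∑ i ∈ Finset.range m, p i * (1 - q i) + p m * (1 - q m) :=
    Finset.sum_range_succ _ m
  have hsplit2 : ∑ i ∈ Finset.range (m + 1), p i * q i
      = p 0 * q 0 + ∑ i ∈ Finset.range m, p (i + 1) * q (i + 1) := by
    rw [Finset.sum_range_succ']
    ring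
  have hsum : ∑ i ∈ Finset.range (m + 1), p i * (1 - q i)
      + ∑ i ∈ Finset.range (m + 1), p i * q i = 1 := by
    rw [← Finset.sum_add_distrib]
    have h : ∑ i ∈ Finset.range (m + 1), (p i * (1 - q i) + p i * q i)
        = ∑ i ∈ Finset.range (m + 1), p i :=
      Finset.sum_congr rfl (fun i _ => by ring)
    rw [h, hpsum]
  -- Part 1
  have hpart1 : ∑ i ∈ Finset.Icc 1 (m + 1), lamc i < lamv := by
    have hsumIcc : ∑ i ∈ Finset.Icc 1 (m + 1), lamc i
        = ∑ i ∈ Finset.Icc 1 m, lamc i + lamc (m + 1) := by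
      rw [← Finset.sum_Icc_succ_top (by omega : 1 ≤ m + 1)]
    have hsumepi : ∑ i ∈ Finset.Icc 1 m, (lamc i + R)
        ≤ ∑ i ∈ Finset.Icc 1 m, lamv * (p (i - 1) * (1 - q (i - 1)) + p i * q i) := by
      apply Finset.sum_le_sum
      intro i hi
      have := hepi i hi
      linarith
    have hE : ∑ i ∈ Finset.Icc 1 m, lamv * (p (i - 1) * (1 - q (i - 1)) + p i * q i)
        + lamv * (p m * (1 - q m) + p 0 * q 0) = lamv := by
      rw [hIcc]
      have : ∑ i ∈ Finset.range m, lamv * (p (i + 1 - 1) * (1 - q (i + 1 - 1)) + p (i + 1) * q (i + 1))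
          = lamv * (∑ i ∈ Finset.range m, p i * (1 - q i)
            + ∑ i ∈ Finset.range m, p (i + 1) * q (i + 1)) := by
        rw [mul_add, Finset.mul_sum, Finset.mul_sum, ← Finset.sum_add_distrib]
        apply Finset.sum_congr rfl
        intro i _
        have h2 : i + 1 - 1 = i := by omega
        rw [h2]; ring
      rw [this]
      have h1 : lamv * 1 = lamv := mul_one lamv
      calc lamv * (∑ i ∈ Finset.range m, p i * (1 - q i)
            + ∑ i ∈ Finset.range m, p (i + 1) * q (i + 1))
          + lamv * (p m * (1 - q m) + p 0 * q 0)
          = lamv * ((∑ i ∈ Finset.range m, p i * (1 - q i) + p m * (1 - q m))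
            + (p 0 * q 0 + ∑ i ∈ Finset.range m, p (i + 1) * q (i + 1))) := by ring
        _ = lamv * 1 := by rw [← hsplit1, ← hsplit2, hsum]
        _ = lamv := mul_one lamv
    have hRsum : (0 : ℝ) ≤ ∑ i ∈ Finset.Icc 1 m, R := by positivity
    have hRpos : (0 : ℝ) < ∑ i ∈ Finset.Icc 1 m, R + R := by linarith
    rw [Finset.sum_add_distrib] at hsumepi
    rw [hsumIcc]
    linarith [hepin]
  refine ⟨hpart1, ?_⟩
  -- Part 2
  have hMMC' : lamv * ∑ i ∈ Finset.range (m + 1), p i * (1 - q i)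
      < (C : ℝ) * ((m + 1) * muc) := by
    rw [Finset.mul_sum]
    convert hMMC using 2
    push_cast
    ring
  have hq2 : ∑ i ∈ Finset.Icc 1 m, p i * q i = ∑ i ∈ Finset.range m, p (i + 1) * q (i + 1) :=
    hIcc _
  have hdecomp : lamv = lamv * ∑ i ∈ Finset.range (m + 1), p i * (1 - q i)
      + lamv * (p 0 * q 0) + lamv * ∑ i ∈ Finset.Icc 1 m, p i * q i := by
    rw [hq2]
    have : lamv * ∑ i ∈ Finset.range (m + 1), p i * (1 - q i)
        + lamv * (p 0 * q 0) + lamv * ∑ i ∈ Finset.range m, p (i + 1) * q (i + 1)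
        = lamv * (∑ i ∈ Finset.range (m + 1), p i * (1 - q i)
          + (p 0 * q 0 + ∑ i ∈ Finset.range m, p (i + 1) * q (i + 1))) := by ring
    rw [this, ← hsplit2, hsum, mul_one]
  have hcast : ((m + 1 : ℕ) : ℝ) = (m : ℝ) + 1 := by push_cast; ring
  rw [hcast]
  linarith [hdecomp, hMMC', hMM1]
end
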